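/- arXiv:1607.00525 — 7 statements merged into one kernel-verified Lean document; each statement's English description precedes it below -/
import Mathlib

section
/- Let $X_0 \geq 0$ and $X_k \geq 0$ for $k = 1, \dots, N$ satisfy $X_k^2 \leq X_0^2 + C_1 + C_2 \sum_{i=0}^{k} X_i$ for all $k \in \{1, \dots, N\}$, where $C_1, C_2 \geq 0$. Then $X_k \leq X_0 + \sqrt{C_1} + C_2 k$ for all $k \in \{1, \dots, N\}$. -/
/-!
With `b k = a + c k`, the map `t ↦ t ^ 2 - c t` satisfies `b (k+1) ^ 2 - c b (k+1) = b k ^ 2 + c b k`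
and is increasing on `[c/2, ∞)`, where every `b k` lies. So once `x i ≤ b i` for all `i ≤ k`, the
hypothesis at `k + 1` bounds `x (k+1) ^ 2 - c x (k+1)` by `A + c ∑_{i ≤ k} b i`, which for `A ≤ a ^ 2`
a telescoping sum shows is at most `b k ^ 2 + c b k`; monotonicity then gives `x (k+1) ≤ b (k+1)`.
-/

namespace Original

open Finset

theorem le_of_sq_sub_mul_le_sq_sub_mul {R : Type*} [CommRing R] [LinearOrder R] [IsStrictOrderedRing R]
    {x b c : R} (hc : c ≤ 2 * b) (h : x ^ 2 - c * x ≤ b ^ 2 - c * b) : x ≤ b := by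
  by_contra! hbx
  nlinarith [mul_pos (sub_pos.mpr hbx) (by linarith : 0 < x + b - c)]

theorem mul_sum_range_add_mul_le {a c : ℝ} (ha : 0 ≤ a) (hc : 0 ≤ c) (k : ℕ) :
    c * ∑ i ∈ range k, (a + c * i) ≤ (a + c * k) ^ 2 - a ^ 2 := by
  induction k with
  | zero => simp
  | succ k ih =>
    rw [sum_range_succ, mul_add]
    push_cast
    nlinarith [mul_nonneg hc (by positivity : 0 ≤ a + c * k)]

theorem le_add_mul_of_sq_le_add_mul_sum {N : ℕ} {x : ℕ → ℝ} {A a c : ℝ} (ha : 0 ≤ a) (hc : 0 ≤ c)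
    (hA : A ≤ a ^ 2) (hx0 : x 0 ≤ a)
    (h : ∀ k, 1 ≤ k → k ≤ N → x k ^ 2 ≤ A + c * ∑ i ∈ range (k + 1), x i) :
    ∀ k ≤ N, x k ≤ a + c * k := by
  intro k
  induction k using Nat.strong_induction_on with
  | _ k ih =>
    intro hkN
    rcases k with _ | j
    · simpa using hx0
    have hsum : ∑ i ∈ range (j + 1), x i ≤ ∑ i ∈ range (j + 1), (a + c * i) :=
      sum_le_sum fun i hi => ih i (mem_range.mp hi) ((mem_range.mp hi).le.trans hkN)
    have htele : c * ∑ i ∈ range (j + 1), (a + c * i) ≤ (a + c * j) ^ 2 - a ^ 2 + c * (a + c * j) := by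
      rw [sum_range_succ, mul_add]
      linarith [mul_sum_range_add_mul_le ha hc j]
    have hxj := h (j + 1) j.succ_pos hkN
    rw [sum_range_succ, mul_add] at hxj
    push_cast
    refine le_of_sq_sub_mul_le_sq_sub_mul (c := c)
      (by linarith [mul_nonneg hc (j.cast_nonneg (α := ℝ))]) ?_
    calc x (j + 1) ^ 2 - c * x (j + 1) ≤ A + c * ∑ i ∈ range (j + 1), x i := by linarith
      _ ≤ a ^ 2 + c * ∑ i ∈ range (j + 1), (a + c * i) := by gcongr
      _ ≤ (a + c * (j + 1)) ^ 2 - c * (a + c * (j + 1)) := by linarith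

theorem discrete_gronwall_general (N : ℕ) (X : ℕ → ℝ) (C1 C2 : ℝ)
    (hX : ∀ k, k ≤ N → 0 ≤ X k) (hC2 : 0 ≤ C2)
    (h : ∀ k, 1 ≤ k → k ≤ N →
      (X k) ^ 2 ≤ (X 0) ^ 2 + C1 + C2 * ∑ i ∈ Finset.range (k + 1), X i) :
    ∀ k, 1 ≤ k → k ≤ N → X k ≤ X 0 + Real.sqrt C1 + C2 * k := by
  intro k _ hkN
  have hX0 : 0 ≤ X 0 := hX 0 (Nat.zero_le N)
  have hsqrt : 0 ≤ Real.sqrt C1 := Real.sqrt_nonneg C1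
  have hA : X 0 ^ 2 + C1 ≤ (X 0 + Real.sqrt C1) ^ 2 := by
    nlinarith [Real.sq_sqrt' (x := C1), le_max_left C1 0, mul_nonneg hX0 hsqrt]
  exact le_add_mul_of_sq_le_add_mul_sum (by positivity) hC2 hA (by linarith) h k hkN

/-- Discrete Grönwall-type inequality. -/
theorem discrete_gronwall (N : ℕ) (X : ℕ → ℝ) (C1 C2 : ℝ)
    (hX : ∀ k, k ≤ N → 0 ≤ X k) (hC1 : 0 ≤ C1) (hC2 : 0 ≤ C2)
    (h : ∀ k, 1 ≤ k → k ≤ N →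
      (X k) ^ 2 ≤ (X 0) ^ 2 + C1 + C2 * ∑ i ∈ Finset.range (k + 1), X i) :
    ∀ k, 1 ≤ k → k ≤ N → X k ≤ X 0 + Real.sqrt C1 + C2 * k :=
  discrete_gronwall_general N X C1 C2 hX hC2 h
end Original
end

section
/- Define $Y_k := X_0^2 + C_1 + C_2 \sum_{i=0}^k X_i$ where $X_i \geq 0$, $C_1, C_2 \geq 0$, and assume $X_k^2 \leq Y_k$ for all $k$. Then $\sqrt{Y_k} - \sqrt{Y_{k-1}} \leq C_2$ for all $k \geq 1$, and hence $\sqrt{Y_k} \leq \sqrt{Y_0} + C_2 k$. -/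
/-! The increment `Y (k + 1) - Y k = C2 * X (k + 1)` is at most `C2 * √(Y (k + 1))`, since
`X (k + 1) ^ 2 ≤ Y (k + 1)`. With `a = √(Y k)` and `b = √(Y (k + 1))`, dividing the
increment `b ^ 2 - a ^ 2 = (b - a) (b + a)` by `b + a ≥ b` bounds each step of `√Y` by `C2`;
the linear bound follows by telescoping. -/

theorem Real.sqrt_sub_sqrt_le_of_sub_le_mul_sqrt {x y c : ℝ} (hc : 0 ≤ c) (hx : 0 ≤ x)
    (h : y - x ≤ c * √y) : √y - √x ≤ c := by
  rcases le_or_gt y 0 with hy | hy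
  · rw [Real.sqrt_eq_zero'.mpr hy]
    linarith [Real.sqrt_nonneg x]
  have hxa : √x ^ 2 = x := Real.sq_sqrt hx
  have hyb : √y ^ 2 = y := Real.sq_sqrt hy.le
  have hb : 0 < √y := Real.sqrt_pos.mpr hy
  nlinarith [Real.sqrt_nonneg x]

theorem le_add_mul_of_forall_succ_sub_le {u : ℕ → ℝ} {c : ℝ} (h : ∀ k, u (k + 1) - u k ≤ c)
    (k : ℕ) : u k ≤ u 0 + c * k := by
  induction k with
  | zero => simp
  | succ k ih =>
    push_cast
    linarith [h k]

theorem sqrt_aux_estimate_general (X : ℕ → ℝ) (C1 C2 : ℝ) (Y : ℕ → ℝ)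
    (hC2 : 0 ≤ C2)
    (hY : ∀ k, Y k = (X 0) ^ 2 + C1 + C2 * ∑ i ∈ Finset.range (k + 1), X i)
    (hXY : ∀ k, (X k) ^ 2 ≤ Y k) :
    (∀ k, Real.sqrt (Y (k + 1)) - Real.sqrt (Y k) ≤ C2) ∧
    (∀ k, Real.sqrt (Y k) ≤ Real.sqrt (Y 0) + C2 * k) := by
  have hstep : ∀ k, √(Y (k + 1)) - √(Y k) ≤ C2 := fun k ↦ by
    have hincr : Y (k + 1) - Y k = C2 * X (k + 1) := by
      rw [hY, hY, Finset.sum_range_succ]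
      ring
    have hX_le : X (k + 1) ≤ √(Y (k + 1)) :=
      (le_abs_self _).trans (Real.abs_le_sqrt (hXY (k + 1)))
    refine Real.sqrt_sub_sqrt_le_of_sub_le_mul_sqrt hC2 ((sq_nonneg _).trans (hXY k)) ?_
    rw [hincr]
    exact mul_le_mul_of_nonneg_left hX_le hC2
  exact ⟨hstep, le_add_mul_of_forall_succ_sub_le hstep⟩

/-- Estimate on the square roots of the auxiliary sequence `Y` in the
discrete Grönwall lemma. -/
theorem sqrt_aux_estimate (X : ℕ → ℝ) (C1 C2 : ℝ) (Y : ℕ → ℝ)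
    (hX : ∀ i, 0 ≤ X i) (hC1 : 0 ≤ C1) (hC2 : 0 ≤ C2)
    (hY : ∀ k, Y k = (X 0) ^ 2 + C1 + C2 * ∑ i ∈ Finset.range (k + 1), X i)
    (hXY : ∀ k, (X k) ^ 2 ≤ Y k) :
    (∀ k, Real.sqrt (Y (k + 1)) - Real.sqrt (Y k) ≤ C2) ∧
    (∀ k, Real.sqrt (Y k) ≤ Real.sqrt (Y 0) + C2 * k) :=
  sqrt_aux_estimate_general X C1 C2 Y hC2 hY hXY
end

section
/- Under the CFL condition $\Delta t \leq \Delta x/\overline{a}$ and $0 < \underline{a} \leq a_j \leq \overline{a}$, the upwind scheme $w_j^{n+1} = (1 - a_j \Delta t/\Delta x) w_j^n + (a_j \Delta t/\Delta x) w_{j-1}^n$ satisfies, for every constant $k \in \mathbb{R}$, the discrete $L^2$ entropy inequality $\frac{(w_j^{n+1} - k)^2}{a_j} - \frac{(w_j^n - k)^2}{a_j} + \frac{\Delta t}{\Delta x}\big((w_j^n - k)^2 - (w_{j-1}^n - k)^2\big) \leq 0$. -/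
/-!
With the Courant number `θ = a_j Δt / Δx`, which the CFL condition places in `[0, 1]`, the upwind
update `w_j^{n+1} - k = (1 - θ) u + θ v`, with `u = w_j^n - k` and `v = w_{j-1}^n - k`, is a convex
combination. Multiplied by `a_j`, the entropy defect is
`((1-θ) u + θ v)² - u² + θ (u² - v²) = -θ (1 - θ) (u - v)²`, the numerical dissipation of the
scheme, which is nonpositive.
-/

lemma convex_comb_sq_sub_sq_add_eq (θ u v : ℝ) :
    ((1 - θ) * u + θ * v) ^ 2 - u ^ 2 + θ * (u ^ 2 - v ^ 2) = -(θ * (1 - θ) * (u - v) ^ 2) := by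
  ring

lemma convex_comb_sq_sub_sq_add_nonpos {θ : ℝ} (h0 : 0 ≤ θ) (h1 : θ ≤ 1) (u v : ℝ) :
    ((1 - θ) * u + θ * v) ^ 2 - u ^ 2 + θ * (u ^ 2 - v ^ 2) ≤ 0 := by
  have h1' : 0 ≤ 1 - θ := sub_nonneg.2 h1
  rw [convex_comb_sq_sub_sq_add_eq, neg_nonpos]
  positivity

lemma courant_mem_Icc_of_cfl {a oa Δt Δx : ℝ} (ha : 0 < a) (hao : a ≤ oa) (hΔx : 0 < Δx)
    (hΔt : 0 ≤ Δt) (hcfl : Δt ≤ Δx / oa) : a * Δt / Δx ∈ Set.Icc 0 1 := by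
  have hoa : 0 < oa := ha.trans_le hao
  refine ⟨by positivity, (div_le_one hΔx).2 ?_⟩
  calc a * Δt ≤ oa * Δt := mul_le_mul_of_nonneg_right hao hΔt
    _ ≤ oa * (Δx / oa) := mul_le_mul_of_nonneg_left hcfl hoa.le
    _ = Δx := mul_div_cancel₀ Δx hoa.ne'

theorem upwind_entropy_L2_general (Nx : ℕ)
    (a : ZMod Nx → ℝ) (w : ℕ → ZMod Nx → ℝ)
    (ua oa Δt Δx : ℝ)
    (hua : 0 < ua) (hbd : ∀ j, ua ≤ a j ∧ a j ≤ oa)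
    (hΔx : 0 < Δx) (hΔt : 0 < Δt) (hcfl : Δt ≤ Δx / oa)
    (hscheme : ∀ n j, w (n + 1) j =
      (1 - a j * Δt / Δx) * w n j + (a j * Δt / Δx) * w n (j - 1)) :
    ∀ n j (k : ℝ),
      (w (n + 1) j - k) ^ 2 / a j - (w n j - k) ^ 2 / a j
        + Δt / Δx * ((w n j - k) ^ 2 - (w n (j - 1) - k) ^ 2) ≤ 0 := by
  intro n j k
  obtain ⟨hua_j, hao_j⟩ := hbd j
  have ha : 0 < a j := hua.trans_le hua_j
  obtain ⟨hθ0, hθ1⟩ := courant_mem_Icc_of_cfl ha hao_j hΔx hΔt.le hcfl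
  set θ := a j * Δt / Δx with hθ
  set u := w n j - k
  set v := w n (j - 1) - k
  have hnext : w (n + 1) j - k = (1 - θ) * u + θ * v := by rw [hscheme]; ring
  calc (w (n + 1) j - k) ^ 2 / a j - u ^ 2 / a j + Δt / Δx * (u ^ 2 - v ^ 2)
      = (((1 - θ) * u + θ * v) ^ 2 - u ^ 2 + θ * (u ^ 2 - v ^ 2)) / a j := by
        rw [hnext, hθ]; field_simp
    _ ≤ 0 := div_nonpos_of_nonpos_of_nonneg (convex_comb_sq_sub_sq_add_nonpos hθ0 hθ1 u v) ha.le

/-- Discrete entropy inequality (L² version) for the upwind scheme. -/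
theorem upwind_entropy_L2 (Nx : ℕ) [NeZero Nx]
    (a : ZMod Nx → ℝ) (w : ℕ → ZMod Nx → ℝ)
    (ua oa Δt Δx : ℝ)
    (hua : 0 < ua) (hbd : ∀ j, ua ≤ a j ∧ a j ≤ oa)
    (hΔx : 0 < Δx) (hΔt : 0 < Δt) (hcfl : Δt ≤ Δx / oa)
    (hscheme : ∀ n j, w (n + 1) j =
      (1 - a j * Δt / Δx) * w n j + (a j * Δt / Δx) * w n (j - 1)) :
    ∀ n j (k : ℝ),
      (w (n + 1) j - k) ^ 2 / a j - (w n j - k) ^ 2 / a j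
        + Δt / Δx * ((w n j - k) ^ 2 - (w n (j - 1) - k) ^ 2) ≤ 0 :=
  upwind_entropy_L2_general Nx a w ua oa Δt Δx hua hbd hΔx hΔt hcfl hscheme
end

section
/- Under the CFL condition $\Delta t \leq \Delta x/\overline{a}$, the periodic upwind scheme satisfies a discrete weighted $L^1$ bound: $\Delta x \sum_{j=1}^{N_x} |w_j^n|/a_j \leq \Delta x \sum_{j=1}^{N_x} |w_j^0|/a_j$ for all $n \geq 0$. -/
/-!
Write `λⱼ = aⱼ Δt / Δx`. The CFL condition gives `0 ≤ λⱼ ≤ 1`, so each new value is a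
convex combination of `w_j` and `w_{j-1}`, and after division by `aⱼ` the triangle inequality
gives
`|w_j^{n+1}| / aⱼ ≤ |w_j^n| / aⱼ - (Δt/Δx) |w_j^n| + (Δt/Δx) |w_{j-1}^n|`.
The weight `1 / aⱼ` is exactly what makes the last two terms independent of `a`, so they
cancel after summing over the periodic grid, where the shift `j ↦ j - 1` is a bijection.
-/

open Finset

theorem abs_convex_combination_le {t : ℝ} (ht₀ : 0 ≤ t) (ht₁ : t ≤ 1) (x y : ℝ) :
    |(1 - t) * x + t * y| ≤ (1 - t) * |x| + t * |y| := by
  calc |(1 - t) * x + t * y| ≤ |(1 - t) * x| + |t * y| := abs_add_le _ _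
    _ = (1 - t) * |x| + t * |y| := by
      rw [abs_mul, abs_mul, abs_of_nonneg (sub_nonneg.mpr ht₁), abs_of_nonneg ht₀]

section UpwindStep

variable {G : Type*} [AddGroup G]

/-- `ν` plays the role of `Δt / Δx`, and `s` of the unit shift `1`. -/
def upwindStep (a : G → ℝ) (ν : ℝ) (s : G) (u : G → ℝ) : G → ℝ :=
  fun j => (1 - a j * ν) * u j + a j * ν * u (j - s)

noncomputable def weightedL1 [Fintype G] (a : G → ℝ) (u : G → ℝ) : ℝ :=
  ∑ j, |u j| / a j

theorem abs_upwindStep_div_le {a : G → ℝ} {ν : ℝ} {j : G} (ha : 0 < a j) (hν : 0 ≤ ν)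
    (hcfl : a j * ν ≤ 1) (s : G) (u : G → ℝ) :
    |upwindStep a ν s u j| / a j ≤ |u j| / a j - ν * |u j| + ν * |u (j - s)| := by
  have hconv := abs_convex_combination_le (mul_nonneg ha.le hν) hcfl (u j) (u (j - s))
  calc |upwindStep a ν s u j| / a j
      ≤ ((1 - a j * ν) * |u j| + a j * ν * |u (j - s)|) / a j :=
        div_le_div_of_nonneg_right hconv ha.le
    _ = |u j| / a j - ν * |u j| + ν * |u (j - s)| := by
        field_simp

theorem weightedL1_upwindStep_le [Fintype G] {a : G → ℝ} {ν : ℝ} (ha : ∀ j, 0 < a j)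
    (hν : 0 ≤ ν) (hcfl : ∀ j, a j * ν ≤ 1) (s : G) (u : G → ℝ) :
    weightedL1 a (upwindStep a ν s u) ≤ weightedL1 a u := by
  have hshift : ∑ j, |u (j - s)| = ∑ j, |u j| :=
    Fintype.sum_equiv (Equiv.subRight s) _ _ fun _ => rfl
  calc weightedL1 a (upwindStep a ν s u)
      ≤ ∑ j, (|u j| / a j - ν * |u j| + ν * |u (j - s)|) :=
        sum_le_sum fun j _ => abs_upwindStep_div_le (ha j) hν (hcfl j) s u
    _ = weightedL1 a u - ν * ∑ j, |u j| + ν * ∑ j, |u (j - s)| := by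
        rw [sum_add_distrib, sum_sub_distrib, mul_sum, mul_sum, weightedL1]
    _ = weightedL1 a u := by
        rw [hshift]
        ring

end UpwindStep

theorem mul_div_le_one_of_cfl {c oa Δt Δx : ℝ} (hc : 0 < c) (hcoa : c ≤ oa) (hΔx : 0 < Δx)
    (hΔt : 0 ≤ Δt) (hcfl : Δt ≤ Δx / oa) : c * (Δt / Δx) ≤ 1 := by
  have hoa : 0 < oa := hc.trans_le hcoa
  rw [le_div_iff₀ hoa] at hcfl
  rw [← mul_div_assoc, div_le_one hΔx]
  nlinarith

/-- Discrete weighted L¹ stability of the periodic upwind scheme. -/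
theorem upwind_L1_bound (Nx : ℕ) [NeZero Nx]
    (a : ZMod Nx → ℝ) (w : ℕ → ZMod Nx → ℝ)
    (ua oa Δt Δx : ℝ)
    (hua : 0 < ua) (hbd : ∀ j, ua ≤ a j ∧ a j ≤ oa)
    (hΔx : 0 < Δx) (hΔt : 0 < Δt) (hcfl : Δt ≤ Δx / oa)
    (hscheme : ∀ n j, w (n + 1) j =
      (1 - a j * Δt / Δx) * w n j + (a j * Δt / Δx) * w n (j - 1)) :
    ∀ n, Δx * ∑ j : ZMod Nx, |w n j| / a j ≤ Δx * ∑ j : ZMod Nx, |w 0 j| / a j := by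
  intro n
  have ha : ∀ j, 0 < a j := fun j => hua.trans_le (hbd j).1
  have hν : 0 ≤ Δt / Δx := div_nonneg hΔt.le hΔx.le
  have hcfl₁ : ∀ j, a j * (Δt / Δx) ≤ 1 := fun j =>
    mul_div_le_one_of_cfl (ha j) (hbd j).2 hΔx hΔt.le hcfl
  have hw : ∀ n, w (n + 1) = upwindStep a (Δt / Δx) 1 (w n) := fun n => by
    funext j
    simp only [hscheme, upwindStep, mul_div_assoc]
  have hanti : Antitone fun n => weightedL1 a (w n) := antitone_nat_of_succ_le fun n => by
    simpa only [hw] using weightedL1_upwindStep_le ha hν hcfl₁ 1 (w n)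
  exact mul_le_mul_of_nonneg_left (hanti (Nat.zero_le n)) hΔx.le
end

section
/- Under the same assumptions (smooth coefficient $a^\delta$ bounded between $\underline{a}$ and $\overline{a}$, Hölder-$\gamma$ initial data), the solution $w^\delta$ of $\partial_t(w^\delta/a^\delta) + \partial_x w^\delta = 0$ is Hölder continuous in space uniformly in $\delta$: $\sup_{t} \sup_{|h| \leq \sigma} \|w^\delta(t, \cdot + h) - w^\delta(t,\cdot)\|_{L^\infty} \leq (\overline{a}/\underline{a})^{\gamma} |w_0|_{C^{0,\gamma}} \sigma^{\gamma}$. -/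
/-!
Let `F` be an antiderivative of `1 / aδ`. Along any characteristic `s ↦ η s x₀` the chain rule
gives `d/ds F (η s x₀) = 1`, so `F` measures travel time: `F (η t x₀) = F x₀ + t`. Hence the
`F`-distance between two characteristics is conserved. Since `F' = 1 / aδ` lies between `1 / oa`
and `1 / ua`, `F` is bi-Lipschitz, so the feet `x₀, y₀` of the characteristics through `x + h`
and `x` at time `t` satisfy `|x₀ - y₀| ≤ (oa / ua) |h|`, and the Hölder bound on `w0` transfers.
-/

theorem Continuous.exists_forall_hasDerivAt {E : Type*} [NormedAddCommGroup E] [NormedSpace ℝ E]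
    [CompleteSpace E] {f : ℝ → E} (hf : Continuous f) :
    ∃ F : ℝ → E, ∀ x, HasDerivAt F (f x) x :=
  ⟨fun x => ∫ y in (0 : ℝ)..x, f y, fun x => (hf.integral_hasStrictDerivAt 0 x).hasDerivAt⟩

theorem mul_abs_sub_le_abs_image_sub_le {F f : ℝ → ℝ} {lo hi : ℝ} (hlo : 0 ≤ lo)
    (hF : ∀ x, HasDerivAt F (f x) x) (hf : ∀ x, lo ≤ f x ∧ f x ≤ hi) (x y : ℝ) :
    lo * |y - x| ≤ |F y - F x| ∧ |F y - F x| ≤ hi * |y - x| := by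
  wlog hxy : x ≤ y generalizing x y
  · rw [abs_sub_comm y, abs_sub_comm (F y)]
    exact this y x (le_of_not_ge hxy)
  have hdF : Differentiable ℝ F := fun x => (hF x).differentiableAt
  have hlower : lo * (y - x) ≤ F y - F x :=
    mul_sub_le_image_sub_of_le_deriv hdF (fun x => (hF x).deriv ▸ (hf x).1) hxy
  have hupper : F y - F x ≤ hi * (y - x) :=
    image_sub_le_mul_sub_of_deriv_le hdF (fun x => (hF x).deriv ▸ (hf x).2) hxy
  have hFxy : 0 ≤ F y - F x := (mul_nonneg hlo (sub_nonneg.2 hxy)).trans hlower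
  rw [abs_of_nonneg (sub_nonneg.2 hxy), abs_of_nonneg hFxy]
  exact ⟨hlower, hupper⟩

theorem apply_comp_eq_add_of_hasDerivAt_inv {a F c : ℝ → ℝ} (ha : ∀ x, a x ≠ 0)
    (hF : ∀ x, HasDerivAt F (a x)⁻¹ x) (hc : ∀ t, HasDerivAt c (a (c t)) t) (t : ℝ) :
    F (c t) = F (c 0) + t := by
  have hderiv : ∀ s, HasDerivAt (fun s => F (c s) - s) 0 s := fun s => by
    have hunit := ((hF (c s)).comp s (hc s)).sub (hasDerivAt_id' s)
    rwa [inv_mul_cancel₀ (ha (c s)), sub_self] at hunit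
  have hconst := is_const_of_deriv_eq_zero (fun s => (hderiv s).differentiableAt)
    (fun s => (hderiv s).deriv) t 0
  simp only [sub_zero] at hconst
  linarith

theorem abs_sub_le_of_hasDerivAt_of_speed_mem_Icc {a c d : ℝ → ℝ} {ua oa : ℝ}
    (ha : Continuous a) (hua : 0 < ua) (hbd : ∀ x, ua ≤ a x ∧ a x ≤ oa)
    (hc : ∀ t, HasDerivAt c (a (c t)) t) (hd : ∀ t, HasDerivAt d (a (d t)) t) (t : ℝ) :
    |c 0 - d 0| ≤ oa / ua * |c t - d t| := by
  have hapos : ∀ x, 0 < a x := fun x => hua.trans_le (hbd x).1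
  have hoa : 0 < oa := (hapos 0).trans_le (hbd 0).2
  obtain ⟨F, hF⟩ := (ha.inv₀ fun x => (hapos x).ne').exists_forall_hasDerivAt
  have hFbd : ∀ x, oa⁻¹ ≤ (a x)⁻¹ ∧ (a x)⁻¹ ≤ ua⁻¹ := fun x =>
    ⟨inv_anti₀ (hapos x) (hbd x).2, inv_anti₀ hua (hbd x).1⟩
  have hFlip := mul_abs_sub_le_abs_image_sub_le (inv_nonneg.2 hoa.le) hF hFbd
  have hshift : F (c 0) - F (d 0) = F (c t) - F (d t) := by
    rw [apply_comp_eq_add_of_hasDerivAt_inv (fun x => (hapos x).ne') hF hc t,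
      apply_comp_eq_add_of_hasDerivAt_inv (fun x => (hapos x).ne') hF hd t]
    ring
  calc |c 0 - d 0| = oa * (oa⁻¹ * |c 0 - d 0|) := by field_simp
    _ ≤ oa * |F (c 0) - F (d 0)| := by gcongr; exact (hFlip (d 0) (c 0)).1
    _ = oa * |F (c t) - F (d t)| := by rw [hshift]
    _ ≤ oa * (ua⁻¹ * |c t - d t|) := by gcongr; exact (hFlip (d t) (c t)).2
    _ = oa / ua * |c t - d t| := by ring

/-- Hölder continuity in space, uniformly in the regularization parameter, of the
solution of the regularized transport equation propagated along characteristics. -/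
theorem holder_continuity_in_space
    (aδ : ℝ → ℝ) (K : NNReal) (haL : LipschitzWith K aδ)
    (ua oa M γ : ℝ) (hua : 0 < ua) (hbd : ∀ x, ua ≤ aδ x ∧ aδ x ≤ oa)
    (hγ : 0 < γ) (hM : 0 ≤ M)
    (η : ℝ → ℝ → ℝ)
    (hη0 : ∀ x0, η 0 x0 = x0)
    (hηd : ∀ t x0, HasDerivAt (fun s => η s x0) (aδ (η t x0)) t)
    (w0 : ℝ → ℝ) (w : ℝ → ℝ → ℝ)
    -- the solution is constant along characteristics
    (hchar : ∀ t x0, w t (η t x0) = w0 x0)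
    -- every point lies on a characteristic
    (hsurj : ∀ t x, ∃ x0, η t x0 = x)
    -- Hölder continuity of the initial data with seminorm `M`
    (hHolder : ∀ x y, |w0 x - w0 y| ≤ M * |x - y| ^ γ) :
    ∀ t σ, 0 ≤ σ → ∀ h, |h| ≤ σ → ∀ x,
      |w t (x + h) - w t x| ≤ (oa / ua) ^ γ * M * σ ^ γ := by
  intro t σ hσ h hh x
  obtain ⟨x0, hx0⟩ := hsurj t (x + h)
  obtain ⟨y0, hy0⟩ := hsurj t x
  have hratio : 0 ≤ oa / ua := div_nonneg (hua.le.trans ((hbd 0).1.trans (hbd 0).2)) hua.le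
  have hfeet : |x0 - y0| ≤ oa / ua * σ := by
    have hsep := abs_sub_le_of_hasDerivAt_of_speed_mem_Icc haL.continuous hua hbd
      (hηd · x0) (hηd · y0) t
    simp only [hη0, hx0, hy0, add_sub_cancel_left] at hsep
    exact hsep.trans (by gcongr)
  rw [← hx0, ← hy0, hchar, hchar]
  calc |w0 x0 - w0 y0| ≤ M * |x0 - y0| ^ γ := hHolder x0 y0
    _ ≤ M * (oa / ua * σ) ^ γ := by gcongr
    _ = (oa / ua) ^ γ * M * σ ^ γ := by rw [Real.mul_rpow hratio hσ]; ring
end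

section
/- Let $u_j^n, v_j^n$ satisfy the finite difference scheme $D^+_t u_j^n = D^c_x v_j^n + \frac{\Delta x}{2} D^+_x D^-_x u_j^n$ and $D^+_t v_j^n / a_j = D^c_x u_j^n + \frac{\Delta x}{2} D^+_x D^-_x v_j^n$ on a periodic grid, with $0 < \underline{a} \leq a_j \leq \overline{a}$ and CFL condition $2\Delta t \max_j \max\{2a_j + 1,\, a_j/4 + 5/4\} \leq \Delta x$. Then the discrete energy is nonincreasing: $\Delta x \sum_j \big( (u_j^n)^2 + (v_j^n)^2/a_j \big) \leq \Delta x \sum_j \big( (u_j^0)^2 + (v_j^0)^2/a_j \big)$ for all $n \geq 0$. -/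
/-!
With `r = Δt / (2 Δx)`, one step of the scheme is `U ↦ U + r P`, `V ↦ V + a r Q` with
`P = increment U V` and `Q = increment V U`, so the energy changes by
`2 r ∑ (U P + V Q) + r² ∑ (P² + a Q²)`. Summing by parts (the central difference is skew-adjoint,
the second difference is minus a sum of squares of jumps) turns the first sum into `-∑ W`, with
`W j = (U (j+1) - U j)² + (V (j+1) - V j)²`, while Cauchy–Schwarz bounds
`P j² + a j Q j²` by `4 (1 + a j) (W j + W (j-1))`. The CFL condition gives `4 r (1 + a j) ≤ 1`,
so the quadratic term is dominated by the dissipation `2 r ∑ W`.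
-/

open Finset

theorem Fintype.sum_shift_sub_eq_zero {G M : Type*} [AddGroup G] [Fintype G] [AddCommGroup M]
    (s : G) (g : G → M) : ∑ j, (g (j + s) - g j) = 0 := by
  rw [sum_sub_distrib, sub_eq_zero]
  exact Fintype.sum_equiv (Equiv.addRight s) _ _ fun _ => rfl

noncomputable section

namespace WaveScheme

variable {N : ℕ} [NeZero N]

def energy (a U V : ZMod N → ℝ) : ℝ := ∑ j, (U j ^ 2 + V j ^ 2 / a j)

-- `2 Δx` times the right-hand side `D^c_x V + (Δx / 2) D^+_x D^-_x U` of the scheme.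
def increment (U V : ZMod N → ℝ) (j : ZMod N) : ℝ :=
  (V (j + 1) - V (j - 1)) + (U (j + 1) - 2 * U j + U (j - 1))

theorem sum_mul_centralDiff (U V : ZMod N → ℝ) :
    ∑ j, (U j * (V (j + 1) - V (j - 1)) + V j * (U (j + 1) - U (j - 1))) = 0 := by
  rw [← Fintype.sum_shift_sub_eq_zero 1 fun j => U (j - 1) * V j + V (j - 1) * U j]
  refine sum_congr rfl fun j _ => ?_
  simp only [add_sub_cancel_right]
  ring

theorem sum_mul_secondDiff (U : ZMod N → ℝ) :
    ∑ j, U j * (U (j + 1) - 2 * U j + U (j - 1)) = -∑ j, (U (j + 1) - U j) ^ 2 := by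
  rw [eq_neg_iff_add_eq_zero, ← sum_add_distrib,
    ← Fintype.sum_shift_sub_eq_zero 1 fun j => U j ^ 2 - U (j - 1) * U j]
  refine sum_congr rfl fun j _ => ?_
  simp only [add_sub_cancel_right]
  ring

theorem sum_mul_increment (U V : ZMod N → ℝ) :
    ∑ j, (U j * increment U V j + V j * increment V U j)
      = -∑ j, ((U (j + 1) - U j) ^ 2 + (V (j + 1) - V j) ^ 2) := by
  have hsplit : ∀ j, U j * increment U V j + V j * increment V U j
      = (U j * (V (j + 1) - V (j - 1)) + V j * (U (j + 1) - U (j - 1)))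
        + U j * (U (j + 1) - 2 * U j + U (j - 1)) + V j * (V (j + 1) - 2 * V j + V (j - 1)) :=
    fun j => by unfold increment; ring
  rw [sum_congr rfl fun j _ => hsplit j, sum_add_distrib, sum_add_distrib, sum_mul_centralDiff,
    sum_mul_secondDiff, sum_mul_secondDiff, sum_add_distrib]
  ring

theorem sq_add_add_add_le (w x y z : ℝ) :
    (w + x + y + z) ^ 2 ≤ 4 * (w ^ 2 + x ^ 2 + y ^ 2 + z ^ 2) := by
  nlinarith [sq_nonneg (w - x), sq_nonneg (w - y), sq_nonneg (w - z),
    sq_nonneg (x - y), sq_nonneg (x - z), sq_nonneg (y - z)]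

omit [NeZero N] in
theorem increment_sq_add_le (U V : ZMod N → ℝ) {c : ℝ} (hc : 0 ≤ c) (j : ZMod N) :
    increment U V j ^ 2 + c * increment V U j ^ 2
      ≤ 4 * (1 + c) * (((U (j + 1) - U j) ^ 2 + (V (j + 1) - V j) ^ 2)
        + ((U j - U (j - 1)) ^ 2 + (V j - V (j - 1)) ^ 2)) := by
  have hP := sq_add_add_add_le (V (j + 1) - V j) (V j - V (j - 1))
    (U (j + 1) - U j) (U (j - 1) - U j)
  have hQ := sq_add_add_add_le (U (j + 1) - U j) (U j - U (j - 1))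
    (V (j + 1) - V j) (V (j - 1) - V j)
  simp only [increment]
  nlinarith [mul_le_mul_of_nonneg_left hQ hc]

theorem energy_update (a U V P Q : ZMod N → ℝ) (ha : ∀ j, a j ≠ 0) (r : ℝ) :
    energy a (fun j => U j + r * P j) (fun j => V j + a j * r * Q j)
      = energy a U V + 2 * r * ∑ j, (U j * P j + V j * Q j)
        + r ^ 2 * ∑ j, (P j ^ 2 + a j * Q j ^ 2) := by
  simp only [energy, mul_sum, ← sum_add_distrib]
  refine sum_congr rfl fun j _ => ?_
  field_simp [ha j]
  ring

theorem energy_step_le (a U V : ZMod N → ℝ) (ha : ∀ j, 0 < a j) {r : ℝ} (hr : 0 ≤ r)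
    (hcfl : ∀ j, 4 * r * (1 + a j) ≤ 1) :
    energy a (fun j => U j + r * increment U V j) (fun j => V j + a j * r * increment V U j)
      ≤ energy a U V := by
  set W : ZMod N → ℝ := fun j => (U (j + 1) - U j) ^ 2 + (V (j + 1) - V j) ^ 2
  have hquad : r ^ 2 * ∑ j, (increment U V j ^ 2 + a j * increment V U j ^ 2)
      ≤ 2 * r * ∑ j, W j := calc
    _ ≤ ∑ j, r * (W j + W (j - 1)) := by
      rw [mul_sum]
      refine sum_le_sum fun j _ => ?_
      have hW : 0 ≤ W j + W (j - 1) := by positivity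
      calc r ^ 2 * (increment U V j ^ 2 + a j * increment V U j ^ 2)
          ≤ r ^ 2 * (4 * (1 + a j) * (W j + W (j - 1))) := by
            gcongr
            simpa only [W, sub_add_cancel] using increment_sq_add_le U V (ha j).le j
        _ = r * (4 * r * (1 + a j)) * (W j + W (j - 1)) := by ring
        _ ≤ r * 1 * (W j + W (j - 1)) := by gcongr; exact hcfl j
        _ = r * (W j + W (j - 1)) := by ring
    _ = 2 * r * ∑ j, W j := by
      have hshift : ∑ j, W (j - 1) = ∑ j, W j :=
        Fintype.sum_equiv (Equiv.subRight 1) _ _ fun _ => rfl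
      rw [← mul_sum, sum_add_distrib, hshift]
      ring
  rw [energy_update a U V _ _ (fun j => (ha j).ne') r, sum_mul_increment]
  linarith

theorem update_of_scheme {x x' c d Δt Δx a : ℝ} (hΔt : Δt ≠ 0) (hΔx : Δx ≠ 0) (ha : a ≠ 0)
    (h : (x' - x) / Δt / a = c / (2 * Δx) + Δx / 2 * (d / Δx ^ 2)) :
    x' = x + a * (Δt / (2 * Δx)) * (c + d) := by
  field_simp at h ⊢
  linear_combination h

end WaveScheme

end

open WaveScheme in
/-- The discrete energy of the finite difference scheme for the 1-D wave system
is nonincreasing under the CFL condition. -/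
theorem wave_scheme_energy_bound (Nx : ℕ) [NeZero Nx]
    (a : ZMod Nx → ℝ) (u v : ℕ → ZMod Nx → ℝ)
    (ua oa Δt Δx : ℝ)
    (hua : 0 < ua) (hbd : ∀ j, ua ≤ a j ∧ a j ≤ oa)
    (hΔx : 0 < Δx) (hΔt : 0 < Δt)
    (hcfl : ∀ j, 2 * Δt * max (2 * a j + 1) (a j / 4 + 5 / 4) ≤ Δx)
    (hschemeu : ∀ n j, (u (n + 1) j - u n j) / Δt =
      (v n (j + 1) - v n (j - 1)) / (2 * Δx)
        + Δx / 2 * ((u n (j + 1) - 2 * u n j + u n (j - 1)) / Δx ^ 2))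
    (hschemev : ∀ n j, ((v (n + 1) j - v n j) / Δt) / a j =
      (u n (j + 1) - u n (j - 1)) / (2 * Δx)
        + Δx / 2 * ((v n (j + 1) - 2 * v n j + v n (j - 1)) / Δx ^ 2)) :
    ∀ n, Δx * ∑ j : ZMod Nx, ((u n j) ^ 2 + (v n j) ^ 2 / a j)
      ≤ Δx * ∑ j : ZMod Nx, ((u 0 j) ^ 2 + (v 0 j) ^ 2 / a j) := by
  have ha : ∀ j, 0 < a j := fun j => hua.trans_le (hbd j).1
  set r := Δt / (2 * Δx) with hr_def
  have hr : 0 ≤ r := by positivity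
  have hcfl' : ∀ j, 4 * r * (1 + a j) ≤ 1 := fun j => calc
    4 * r * (1 + a j) = 2 * Δt * (1 + a j) / Δx := by rw [hr_def]; field_simp; ring
    _ ≤ 2 * Δt * max (2 * a j + 1) (a j / 4 + 5 / 4) / Δx := by
      gcongr
      exact le_max_of_le_left (by linarith [ha j])
    _ ≤ 1 := (div_le_one hΔx).mpr (hcfl j)
  have hstep : ∀ n, energy a (u (n + 1)) (v (n + 1)) ≤ energy a (u n) (v n) := fun n => by
    have hu : u (n + 1) = fun j => u n j + r * increment (u n) (v n) j := funext fun j => by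
      have := update_of_scheme hΔt.ne' hΔx.ne' one_ne_zero ((div_one _).trans (hschemeu n j))
      rwa [one_mul] at this
    have hv : v (n + 1) = fun j => v n j + a j * r * increment (v n) (u n) j := funext fun j =>
      update_of_scheme hΔt.ne' hΔx.ne' (ha j).ne' (hschemev n j)
    rw [hu, hv]
    exact energy_step_le a (u n) (v n) ha hr hcfl'
  intro n
  have hmono : energy a (u n) (v n) ≤ energy a (u 0) (v 0) :=
    antitone_nat_of_succ_le (f := fun n => energy a (u n) (v n)) hstep (Nat.zero_le n)
  exact mul_le_mul_of_nonneg_left hmono hΔx.le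
end

section
/- For periodic grid functions $u_j, v_j$ with $a_j$ satisfying $0 < \underline{a} \leq a_j$, and $\Delta t = \theta \Delta x$ related by the scheme $D^+_t u_j = D^c_x v_j + \frac{\Delta x}{2}D^+_x D^-_x u_j$, $D^+_t v_j/a_j = D^c_x u_j + \frac{\Delta x}{2}D^+_x D^-_x v_j$, the following identity holds: $\sum_j |D^+_t u_j|^2 + \frac{1}{a_j^2}|D^+_t v_j|^2 = \sum_j |D^c_x u_j|^2 + |D^c_x v_j|^2 + \frac{\Delta x^2}{4}\big(|D^+_x D^-_x u_j|^2 + |D^+_x D^-_x v_j|^2\big)$. -/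
/-!
Substituting the scheme, each time difference is `D^c_x w + (Δx/2) D^+_x D^-_x w'`; squaring
produces the claimed terms plus the cross term `Δx (D^c_x v D^+_x D^-_x u + D^c_x u D^+_x D^-_x v)`.
That cross term is a backward difference of `(D^+_x u)(D^+_x v)` (a discrete product rule), so it
telescopes to zero over the periodic grid.
-/

open Finset

section SummationByParts

variable {G R : Type*} [AddGroup G] [Fintype G] [CommRing R]

theorem sum_sub_shift_eq_zero (F : G → R) (s : G) : ∑ j, (F j - F (j - s)) = 0 := by
  rw [sum_sub_distrib, sub_eq_zero]
  exact ((Equiv.subRight s).sum_comp F).symm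

theorem sum_centred_mul_second_difference_add_eq_zero (p q : G → R) (s : G) :
    ∑ j, ((q (j + s) - q (j - s)) * (p (j + s) - 2 * p j + p (j - s))
      + (p (j + s) - p (j - s)) * (q (j + s) - 2 * q j + q (j - s))) = 0 := by
  set F : G → R := fun j => 2 * ((p (j + s) - p j) * (q (j + s) - q j))
  have product_rule : ∀ j,
      (q (j + s) - q (j - s)) * (p (j + s) - 2 * p j + p (j - s))
        + (p (j + s) - p (j - s)) * (q (j + s) - 2 * q j + q (j - s)) = F j - F (j - s) := by
    intro j
    simp only [F, sub_add_cancel]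
    ring
  simp only [product_rule, sum_sub_shift_eq_zero]

end SummationByParts

noncomputable section PeriodicGrid

variable {n : ℕ}

def centralDiff (Δx : ℝ) (u : ZMod n → ℝ) (j : ZMod n) : ℝ :=
  (u (j + 1) - u (j - 1)) / (2 * Δx)

def secondDiff (Δx : ℝ) (u : ZMod n → ℝ) (j : ZMod n) : ℝ :=
  (u (j + 1) - 2 * u j + u (j - 1)) / Δx ^ 2

theorem sum_centralDiff_mul_secondDiff_add_eq_zero [NeZero n] (Δx : ℝ) (p q : ZMod n → ℝ) :
    ∑ j, (centralDiff Δx q j * secondDiff Δx p j + centralDiff Δx p j * secondDiff Δx q j)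
      = 0 := by
  have as_quotient : ∀ j, centralDiff Δx q j * secondDiff Δx p j + centralDiff Δx p j * secondDiff Δx q j
      = ((q (j + 1) - q (j - 1)) * (p (j + 1) - 2 * p j + p (j - 1))
          + (p (j + 1) - p (j - 1)) * (q (j + 1) - 2 * q j + q (j - 1))) / (2 * Δx * Δx ^ 2) := by
    intro j
    simp only [centralDiff, secondDiff]
    ring
  rw [sum_congr rfl fun j _ => as_quotient j, ← sum_div, sum_centred_mul_second_difference_add_eq_zero,
    zero_div]

end PeriodicGrid

theorem wave_scheme_time_space_identity_general (Nx : ℕ) [NeZero Nx]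
    (a : ZMod Nx → ℝ) (un u1 vn v1 : ZMod Nx → ℝ)
    (Δt Δx : ℝ)
    (hschemeu : ∀ j, (u1 j - un j) / Δt =
      (vn (j + 1) - vn (j - 1)) / (2 * Δx)
        + Δx / 2 * ((un (j + 1) - 2 * un j + un (j - 1)) / Δx ^ 2))
    (hschemev : ∀ j, ((v1 j - vn j) / Δt) / a j =
      (un (j + 1) - un (j - 1)) / (2 * Δx)
        + Δx / 2 * ((vn (j + 1) - 2 * vn j + vn (j - 1)) / Δx ^ 2)) :
    ∑ j : ZMod Nx, (((u1 j - un j) / Δt) ^ 2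
        + (1 / (a j) ^ 2) * ((v1 j - vn j) / Δt) ^ 2)
      = ∑ j : ZMod Nx,
          (((un (j + 1) - un (j - 1)) / (2 * Δx)) ^ 2
            + ((vn (j + 1) - vn (j - 1)) / (2 * Δx)) ^ 2
            + Δx ^ 2 / 4 *
              (((un (j + 1) - 2 * un j + un (j - 1)) / Δx ^ 2) ^ 2
                + ((vn (j + 1) - 2 * vn j + vn (j - 1)) / Δx ^ 2) ^ 2)) := by
  set Du := centralDiff Δx un
  set Dv := centralDiff Δx vn
  set D2u := secondDiff Δx un
  set D2v := secondDiff Δx vn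
  have hv : ∀ j, 1 / a j ^ 2 * ((v1 j - vn j) / Δt) ^ 2 = (Du j + Δx / 2 * D2v j) ^ 2 := by
    intro j
    rw [one_div_mul_eq_div, ← div_pow, hschemev j]
    rfl
  calc _ = ∑ j, ((Dv j + Δx / 2 * D2u j) ^ 2 + (Du j + Δx / 2 * D2v j) ^ 2) := by
          simp only [hschemeu, hv]
          rfl
    _ = ∑ j, ((Du j ^ 2 + Dv j ^ 2 + Δx ^ 2 / 4 * (D2u j ^ 2 + D2v j ^ 2))
          + Δx * (Dv j * D2u j + Du j * D2v j)) := sum_congr rfl fun j _ => by ring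
    _ = ∑ j, (Du j ^ 2 + Dv j ^ 2 + Δx ^ 2 / 4 * (D2u j ^ 2 + D2v j ^ 2)) := by
          rw [sum_add_distrib, ← mul_sum, sum_centralDiff_mul_secondDiff_add_eq_zero, mul_zero,
            add_zero]

/-- Identity (qer) relating discrete time derivatives to discrete space
derivatives for the wave-equation finite difference scheme on a periodic grid. -/
theorem wave_scheme_time_space_identity (Nx : ℕ) [NeZero Nx]
    (a : ZMod Nx → ℝ) (un u1 vn v1 : ZMod Nx → ℝ)
    (ua θ Δt Δx : ℝ)
    (hua : 0 < ua) (hbd : ∀ j, ua ≤ a j)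
    (hΔx : 0 < Δx) (hΔt : 0 < Δt) (hθ : Δt = θ * Δx)
    (hschemeu : ∀ j, (u1 j - un j) / Δt =
      (vn (j + 1) - vn (j - 1)) / (2 * Δx)
        + Δx / 2 * ((un (j + 1) - 2 * un j + un (j - 1)) / Δx ^ 2))
    (hschemev : ∀ j, ((v1 j - vn j) / Δt) / a j =
      (un (j + 1) - un (j - 1)) / (2 * Δx)
        + Δx / 2 * ((vn (j + 1) - 2 * vn j + vn (j - 1)) / Δx ^ 2)) :
    ∑ j : ZMod Nx, (((u1 j - un j) / Δt) ^ 2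
        + (1 / (a j) ^ 2) * ((v1 j - vn j) / Δt) ^ 2)
      = ∑ j : ZMod Nx,
          (((un (j + 1) - un (j - 1)) / (2 * Δx)) ^ 2
            + ((vn (j + 1) - vn (j - 1)) / (2 * Δx)) ^ 2
            + Δx ^ 2 / 4 *
              (((un (j + 1) - 2 * un j + un (j - 1)) / Δx ^ 2) ^ 2
                + ((vn (j + 1) - 2 * vn j + vn (j - 1)) / Δx ^ 2) ^ 2)) :=
  wave_scheme_time_space_identity_general Nx a un u1 vn v1 Δt Δx hschemeu hschemev
end
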